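/- For all nonnegative integers l, m, n: \sum_{j=0}^{n} [n choose_1 j] B_m^{(-l-j)}(n) = \sum_{j=0}^{n} [n choose_1 j] B_l^{(-m-j)}(n), a one-parameter generalization of the poly-Bernoulli duality formula. -/

import Mathlib

/-!
Expanding `Li_{-k}` and summing the Stirling numbers into the rising factorial
`⟨p + 1⟩ₙ = (p + 1) ⋯ (p + n) = ∑ⱼ [n j] (p + 1) ^ j` turns `𝓑_m^{(-l)}(n)` into
`∑ₚ (-1) ^ (m + p) ⟨p + 1⟩ₙ (p + 1) ^ l Δᵖ[(n + t) ^ m](0)`.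
Newton's expansion `(p + 1) ^ l = ∑ₖ C(p, k) Δᵏ[(1 + t) ^ l](0)` reduces this to the inner sums
`∑ₚ (-1) ^ (m + p) ⟨p + 1⟩ₙ C(p, k) Δᵖ[(n + t) ^ m](0) = ⟨k + 1⟩ₙ Δᵏ[(1 + t) ^ m](0)`,
which follow by induction on `m` from
`Δᵖ[(x + t) ^ (m + 1)](0) = (x + p) Δᵖ[(x + t) ^ m](0) + p Δᵖ⁻¹[(x + t) ^ m](0)`.
The result is the manifestly symmetric formula
`𝓑_m^{(-l)}(n) = ∑ₖ ⟨k + 1⟩ₙ Δᵏ[(1 + t) ^ l](0) Δᵏ[(1 + t) ^ m](0)`,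
which for `n = 0` is the classical `B_m^{(-l)} = ∑ₖ k!² S(l + 1, k + 1) S(m + 1, k + 1)`.
-/

open PowerSeries Finset

/-- Unsigned Stirling numbers of the first kind. -/
def stirling1 : ℕ → ℕ → ℕ
  | 0, 0 => 1
  | 0, _ + 1 => 0
  | _ + 1, 0 => 0
  | n + 1, m + 1 => stirling1 n m + n * stirling1 n (m + 1)

/-- Stirling numbers of the second kind. -/
def stirling2 : ℕ → ℕ → ℕ
  | 0, 0 => 1
  | 0, _ + 1 => 0
  | _ + 1, 0 => 0
  | n + 1, m + 1 => stirling2 n m + (m + 1) * stirling2 n (m + 1)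

/-- e^t as a formal power series over ℚ. -/
noncomputable def expQ : PowerSeries ℚ := PowerSeries.exp ℚ

/-- e^{-t} as a formal power series over ℚ. -/
noncomputable def expNegQ : PowerSeries ℚ := rescale (-1) expQ

/-- The formal power series Li_k(1-e^{-t})/(1-e^{-t}) = ∑_{m≥0} (m+1)^{-k} (1-e^{-t})^m,
  defined coefficientwise (the tail vanishes since (1-e^{-t})^m has order m). -/
noncomputable def liEGF (k : ℤ) : PowerSeries ℚ :=
  PowerSeries.mk fun j =>
    ∑ m ∈ range (j + 1), ((m : ℚ) + 1) ^ (-k) * coeff j ((1 - expNegQ) ^ m)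

/-- EGF of the poly-Bernoulli polynomials: e^{-xt} Li_k(1-e^{-t})/(1-e^{-t}). -/
noncomputable def pbEGF (k : ℤ) (x : ℚ) : PowerSeries ℚ := rescale (-x) expQ * liEGF k

/-- Poly-Bernoulli polynomial value B_m^{(k)}(x). -/
noncomputable def pbPoly (k : ℤ) (x : ℚ) (m : ℕ) : ℚ := m.factorial * coeff m (pbEGF k x)

/-- Poly-Bernoulli number B_m^{(k)}. -/
noncomputable def pbB (k : ℤ) (m : ℕ) : ℚ := pbPoly k 0 m

/-- Poly-Bernoulli number C_m^{(k)}. -/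
noncomputable def pbC (k : ℤ) (m : ℕ) : ℚ := pbPoly k 1 m

/-- 𝓑_m^{(-l)}(n) = ∑_{j=0}^n [n j] B_m^{(-l-j)}(n). -/
noncomputable def scrB (l m n : ℕ) : ℚ :=
  ∑ j ∈ range (n + 1), (stirling1 n j : ℚ) * pbPoly (-(l : ℤ) - j) n m


open scoped fwdDiff

section FwdDiff

variable {R : Type*} [CommRing R]

theorem fwdDiff_iter_succ_add_mul (g : R → R) (x t : R) (p : ℕ) :
    Δ_[1] ^[p + 1] (fun s => (x + s) * g s) t
      = (x + t + (p + 1)) * Δ_[1] ^[p + 1] g t + (p + 1) * Δ_[1] ^[p] g t := by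
  induction p generalizing t with
  | zero => simp only [zero_add, Function.iterate_one, Function.iterate_zero, id, fwdDiff]; ring
  | succ p ih =>
    have hg : ∀ q s, Δ_[1] ^[q + 1] g s = Δ_[1] ^[q] g (s + 1) - Δ_[1] ^[q] g s := fun q s => by
      rw [Function.iterate_succ_apply', fwdDiff]
    rw [Function.iterate_succ_apply', fwdDiff, ih, ih, hg (p + 1) t, hg p t, hg p (t + 1)]
    push_cast
    ring

/-- `p!` times an `r`-Stirling number of the second kind, with `r = x`. -/
def fwdDiffPow (x : R) (m p : ℕ) : R := Δ_[1] ^[p] (fun t : R => (x + t) ^ m) 0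

theorem fwdDiffPow_zero_right (x : R) (m : ℕ) : fwdDiffPow x m 0 = x ^ m := by
  simp [fwdDiffPow]

theorem fwdDiffPow_eq_zero_of_lt (x : R) {m p : ℕ} (h : m < p) : fwdDiffPow x m p = 0 := by
  have := fwdDiff_iter_comp_add (1 : R) (fun t : R => t ^ m) x p 0
  simp only [add_comm _ x] at this
  rw [fwdDiffPow, this, fwdDiff_iter_pow_eq_zero_of_lt h, Pi.zero_apply]

-- At `p = 0` the truncated `p - 1` is harmless, its coefficient being `0`.
theorem fwdDiffPow_succ_left (x : R) (m p : ℕ) :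
    fwdDiffPow x (m + 1) p = (x + p) * fwdDiffPow x m p + p * fwdDiffPow x m (p - 1) := by
  cases p with
  | zero => simp [fwdDiffPow_zero_right, pow_succ']
  | succ p =>
    simp only [fwdDiffPow, pow_succ', fwdDiff_iter_succ_add_mul, add_zero, Nat.add_sub_cancel]
    push_cast
    ring

theorem add_pow_eq_sum_choose_mul_fwdDiffPow (x : R) (l p : ℕ) {N : ℕ} (h : l < N) :
    (x + p) ^ l = ∑ k ∈ range N, (p.choose k : R) * fwdDiffPow x l k := by
  have hnewton := shift_eq_sum_fwdDiff_iter (1 : R) (fun t : R => (x + t) ^ l) p 0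
  simp only [zero_add, nsmul_eq_mul, mul_one] at hnewton
  rw [hnewton]
  calc ∑ k ∈ range (p + 1), (p.choose k : R) * fwdDiffPow x l k
      = ∑ k ∈ range (p + 1 + N), (p.choose k : R) * fwdDiffPow x l k :=
        sum_subset (range_subset_range.mpr (by omega)) fun k _ hk => by
          rw [Nat.choose_eq_zero_of_lt (by simpa using hk), Nat.cast_zero, zero_mul]
    _ = ∑ k ∈ range N, (p.choose k : R) * fwdDiffPow x l k :=
        (sum_subset (range_subset_range.mpr (by omega)) fun k _ hk => by
          rw [fwdDiffPow_eq_zero_of_lt x (by simp at hk; omega), mul_zero]).symm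

end FwdDiff

theorem coeff_rescale_expQ_mul_expQ_sub_one_pow (x : ℚ) (m p : ℕ) :
    coeff m (rescale x expQ * (expQ - 1) ^ p) = fwdDiffPow x m p / m.factorial := by
  rw [sub_eq_add_neg, add_pow, mul_sum, map_sum, fwdDiffPow, fwdDiff_iter_eq_sum_shift, sum_div]
  refine sum_congr rfl fun q _ => ?_
  have hC : (-1 : ℚ⟦X⟧) ^ (p - q) * (p.choose q : ℚ⟦X⟧) = C ((-1 : ℚ) ^ (p - q) * p.choose q) := by
    simp
  rw [expQ, exp_pow_eq_rescale_exp, mul_assoc, hC, mul_left_comm, ← mul_assoc, coeff_mul_C,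
    exp_mul_exp_eq_exp_add, coeff_rescale, coeff_exp]
  simp only [Algebra.algebraMap_self, RingHom.id_apply, one_div, zero_add, nsmul_eq_mul, mul_one,
    zsmul_eq_mul, Int.cast_mul, Int.cast_pow, Int.cast_neg, Int.cast_one, Int.cast_natCast]
  ring

theorem coeff_rescale_neg_expQ_mul_one_sub_expNegQ_pow (x : ℚ) (m p : ℕ) :
    coeff m (rescale (-x) expQ * (1 - expNegQ) ^ p)
      = (-1) ^ (m + p) * fwdDiffPow x m p / m.factorial := by
  have hflip : rescale (-x) expQ * (1 - expNegQ) ^ p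
      = rescale (-1) (rescale x expQ * (1 - expQ) ^ p) := by
    rw [map_mul, map_pow, map_sub, map_one, rescale_rescale, mul_neg_one, expNegQ]
  have hsign : (1 - expQ) ^ p = C ((-1 : ℚ) ^ p) * (expQ - 1) ^ p := by
    rw [← neg_sub, neg_pow, map_pow, map_neg, map_one]
  rw [hflip, coeff_rescale, hsign, mul_left_comm, coeff_C_mul,
    coeff_rescale_expQ_mul_expQ_sub_one_pow]
  ring

theorem coeff_one_sub_expNegQ_pow_of_lt {j p : ℕ} (h : j < p) :
    coeff j ((1 - expNegQ) ^ p) = 0 := by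
  have h0 : constantCoeff (1 - expNegQ) = 0 := by
    rw [map_sub, map_one, expNegQ, ← coeff_zero_eq_constantCoeff_apply, coeff_rescale, pow_zero,
      one_mul, expQ, coeff_zero_eq_constantCoeff_apply, constantCoeff_exp, sub_self]
  exact X_pow_dvd_iff.mp (pow_dvd_pow_of_dvd (X_dvd_iff.mpr h0) p) j h

theorem coeff_mul_liEGF (F : ℚ⟦X⟧) (k : ℤ) (m : ℕ) :
    coeff m (F * liEGF k)
      = ∑ p ∈ range (m + 1), ((p : ℚ) + 1) ^ (-k) * coeff m (F * (1 - expNegQ) ^ p) := by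
  have hli : ∀ j ≤ m, coeff j (liEGF k)
      = ∑ p ∈ range (m + 1), ((p : ℚ) + 1) ^ (-k) * coeff j ((1 - expNegQ) ^ p) := by
    intro j hj
    rw [liEGF, coeff_mk]
    refine sum_subset (range_subset_range.mpr (by omega)) fun p _ hp => ?_
    rw [coeff_one_sub_expNegQ_pow_of_lt (by simpa using hp), mul_zero]
  simp only [coeff_mul, mul_sum]
  rw [sum_comm]
  refine sum_congr rfl fun ij hij => ?_
  rw [hli ij.2 (by have := mem_antidiagonal.mp hij; omega), mul_sum]
  exact sum_congr rfl fun p _ => by ring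

theorem pbPoly_eq_sum (k : ℤ) (x : ℚ) (m : ℕ) :
    pbPoly k x m = ∑ p ∈ range (m + 1),
      ((p : ℚ) + 1) ^ (-k) * ((-1) ^ (m + p) * fwdDiffPow x m p) := by
  have hm : (m.factorial : ℚ) ≠ 0 := Nat.cast_ne_zero.mpr m.factorial_ne_zero
  rw [pbPoly, pbEGF, coeff_mul_liEGF, mul_sum]
  refine sum_congr rfl fun p _ => ?_
  rw [coeff_rescale_neg_expQ_mul_one_sub_expNegQ_pow]
  field_simp

theorem stirling1_eq_stirlingFirst : ∀ n k : ℕ, stirling1 n k = Nat.stirlingFirst n k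
  | 0, 0 => rfl
  | 0, _ + 1 => rfl
  | _ + 1, 0 => rfl
  | n + 1, k + 1 => by
    rw [stirling1, Nat.stirlingFirst_succ_succ, stirling1_eq_stirlingFirst n k,
      stirling1_eq_stirlingFirst n (k + 1), add_comm]

theorem sum_stirlingFirst_mul_pow {R : Type*} [CommRing R] (n : ℕ) (y : R) :
    ∑ j ∈ range (n + 1), (n.stirlingFirst j : R) * y ^ j = (ascPochhammer R n).eval y := by
  induction n with
  | zero => simp
  | succ n ih =>
    have hshift : ∑ j ∈ range (n + 1), (n.stirlingFirst (j + 1) : R) * y ^ (j + 1)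
        + n.stirlingFirst 0 = (ascPochhammer R n).eval y := by
      have := sum_range_succ' (fun j => (n.stirlingFirst j : R) * y ^ j) (n + 1)
      rw [sum_range_succ, Nat.stirlingFirst_eq_zero_of_lt (Nat.lt_succ_self n), ih] at this
      simpa using this.symm
    have hzero : (n : R) * n.stirlingFirst 0 = 0 := by
      cases n <;> simp
    rw [sum_range_succ', ascPochhammer_succ_eval]
    simp only [Nat.stirlingFirst_succ_succ, Nat.stirlingFirst_succ_zero, Nat.cast_add,
      Nat.cast_mul, Nat.cast_zero, zero_mul, add_zero, add_mul, sum_add_distrib, mul_assoc,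
      ← mul_sum, pow_succ', mul_left_comm _ y] at hshift ⊢
    linear_combination y * ih + n * hshift - hzero

noncomputable def dualityForm (n m : ℕ) (c : ℕ → ℚ) : ℚ :=
  ∑ p ∈ range (m + 1),
    (-1) ^ (m + p) * (ascPochhammer ℚ n).eval ((p : ℚ) + 1) * c p * fwdDiffPow (n : ℚ) m p

theorem dualityForm_eq_sum_range (n m : ℕ) (c : ℕ → ℚ) {N : ℕ} (h : m < N) :
    dualityForm n m c = ∑ p ∈ range N,
      (-1) ^ (m + p) * (ascPochhammer ℚ n).eval ((p : ℚ) + 1) * c p * fwdDiffPow (n : ℚ) m p :=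
  sum_subset (range_subset_range.mpr h) fun p _ hp => by
    rw [fwdDiffPow_eq_zero_of_lt _ (by simpa using hp), mul_zero]

theorem dualityForm_add (n m : ℕ) (a b : ℚ) (c d : ℕ → ℚ) :
    dualityForm n m (fun p => a * c p + b * d p)
      = a * dualityForm n m c + b * dualityForm n m d := by
  simp only [dualityForm, mul_sum, ← sum_add_distrib]
  exact sum_congr rfl fun p _ => by ring

theorem dualityForm_sum {ι : Type*} (s : Finset ι) (n m : ℕ) (a : ι → ℚ) (c : ι → ℕ → ℚ) :
    dualityForm n m (fun p => ∑ k ∈ s, a k * c k p) = ∑ k ∈ s, a k * dualityForm n m (c k) := by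
  simp only [dualityForm, mul_sum, sum_mul]
  rw [sum_comm]
  exact sum_congr rfl fun k _ => sum_congr rfl fun p _ => by ring

theorem dualityForm_succ (n m : ℕ) (c : ℕ → ℚ) :
    dualityForm n (m + 1) c
      = dualityForm n m (fun p => (p + 1 + n) * c (p + 1) - (p + n) * c p) := by
  have hA : ∀ p : ℕ, ((p : ℚ) + 1) * (ascPochhammer ℚ n).eval ((p : ℚ) + 1 + 1)
      = (p + 1 + n) * (ascPochhammer ℚ n).eval ((p : ℚ) + 1) := fun p => by
    simpa [add_comm, add_left_comm, add_assoc] using ascPochhammer_eval_succ (S := ℚ) n (p + 1)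
  have hsplit : dualityForm n (m + 1) c
      = -dualityForm n m (fun p => (p + n) * c p)
        + ∑ p ∈ range (m + 2), (-1) ^ (m + 1 + p) * (ascPochhammer ℚ n).eval ((p : ℚ) + 1)
            * c p * (p * fwdDiffPow (n : ℚ) m (p - 1)) := by
    rw [dualityForm_eq_sum_range n m _ (by omega : m < m + 2), dualityForm, ← sum_neg_distrib,
      ← sum_add_distrib]
    refine sum_congr rfl fun p _ => ?_
    rw [fwdDiffPow_succ_left]
    ring
  have hshift : ∑ p ∈ range (m + 2), (-1) ^ (m + 1 + p) * (ascPochhammer ℚ n).eval ((p : ℚ) + 1)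
        * c p * (p * fwdDiffPow (n : ℚ) m (p - 1))
      = dualityForm n m (fun p => (p + 1 + n) * c (p + 1)) := by
    rw [sum_range_succ', dualityForm]
    simp only [CharP.cast_eq_zero, zero_mul, mul_zero, add_zero, Nat.add_sub_cancel]
    refine sum_congr rfl fun p _ => ?_
    rw [show m + 1 + (p + 1) = m + p + 2 by ring, pow_add, neg_one_sq, mul_one]
    push_cast
    linear_combination ((-1) ^ (m + p) * c (p + 1) * fwdDiffPow (n : ℚ) m p) * hA p
  rw [hsplit, hshift, dualityForm, dualityForm, dualityForm, ← sum_neg_distrib, ← sum_add_distrib]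
  exact sum_congr rfl fun p _ => by ring

theorem dualityForm_choose (n m k : ℕ) :
    dualityForm n m (fun p => (p.choose k : ℚ))
      = (ascPochhammer ℚ n).eval ((k : ℚ) + 1) * fwdDiffPow 1 m k := by
  induction m generalizing k with
  | zero =>
    cases k with
    | zero => simp [dualityForm, fwdDiffPow_zero_right]
    | succ k => simp [dualityForm, fwdDiffPow_eq_zero_of_lt]
  | succ m ih =>
    rw [dualityForm_succ, fwdDiffPow_succ_left]
    cases k with
    | zero => simpa using ih 0
    | succ k =>
      have hpascal : ∀ p : ℕ, ((p : ℚ) + 1 + n) * ((p + 1).choose (k + 1) : ℚ)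
          - (p + n) * (p.choose (k + 1) : ℚ)
          = (k + 2) * (p.choose (k + 1) : ℚ) + (k + 1 + n) * (p.choose k : ℚ) := fun p => by
        have h1 : ((p + 1) * p.choose k : ℚ) = (p + 1).choose (k + 1) * (k + 1) := by
          exact_mod_cast Nat.add_one_mul_choose_eq p k
        have h2 : ((p + 1).choose (k + 1) : ℚ) = p.choose k + p.choose (k + 1) := by
          exact_mod_cast Nat.choose_succ_succ' p k
        linear_combination (p + n + k + 2) * h2 + h1
      have hA := ascPochhammer_eval_succ (S := ℚ) n (k + 1)
      simp only [hpascal, dualityForm_add, ih, Nat.add_sub_cancel]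
      push_cast at hA ⊢
      linear_combination (-fwdDiffPow 1 m k) * hA

theorem scrB_eq_dualityForm (l m n : ℕ) :
    scrB l m n = dualityForm n m (fun p => ((p : ℚ) + 1) ^ l) := by
  simp only [scrB, dualityForm, pbPoly_eq_sum, mul_sum]
  rw [sum_comm]
  refine sum_congr rfl fun p _ => ?_
  have hexp : ∀ j : ℕ, ((p : ℚ) + 1) ^ (-(-(l : ℤ) - j)) = ((p : ℚ) + 1) ^ l * ((p : ℚ) + 1) ^ j :=
    fun j => by rw [show -(-(l : ℤ) - j) = ((l + j : ℕ) : ℤ) by push_cast; ring, zpow_natCast,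
      pow_add]
  rw [← sum_stirlingFirst_mul_pow, mul_sum, sum_mul, sum_mul]
  refine sum_congr rfl fun j _ => ?_
  rw [hexp, stirling1_eq_stirlingFirst]
  ring

theorem scrB_eq_sum (l m n : ℕ) {N : ℕ} (h : l < N) :
    scrB l m n = ∑ k ∈ range N,
      (ascPochhammer ℚ n).eval ((k : ℚ) + 1) * fwdDiffPow 1 l k * fwdDiffPow 1 m k := by
  have hnewton : (fun p : ℕ => ((p : ℚ) + 1) ^ l)
      = fun p => ∑ k ∈ range N, fwdDiffPow 1 l k * (p.choose k : ℚ) := by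
    funext p
    rw [add_comm, add_pow_eq_sum_choose_mul_fwdDiffPow 1 l p h]
    exact sum_congr rfl fun k _ => mul_comm _ _
  rw [scrB_eq_dualityForm, hnewton, dualityForm_sum]
  exact sum_congr rfl fun k _ => by rw [dualityForm_choose]; ring

/-- One-parameter generalization of the poly-Bernoulli duality. -/
theorem scrB_duality (l m n : ℕ) :
    ∑ j ∈ range (n + 1), (stirling1 n j : ℚ) * pbPoly (-(l : ℤ) - j) n m =
    ∑ j ∈ range (n + 1), (stirling1 n j : ℚ) * pbPoly (-(m : ℤ) - j) n l := by
  change scrB l m n = scrB m l n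
  rw [scrB_eq_sum l m n (by omega : l < l + m + 1), scrB_eq_sum m l n (by omega : m < l + m + 1)]
  exact sum_congr rfl fun k _ => by ring
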